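/- arXiv:2412.18375 — 5 statements merged into one kernel-verified Lean document; each statement's English description precedes it below -/
import Mathlib

section
/- For every real k > 0, the function f : (0,∞) → ℝ defined by f(x) = (k/x + 1)^(x-1) is strictly monotone increasing. -/
open Real

private lemma g_hasDeriv (k : ℝ) (hk : 0 < k) {x : ℝ} (hx : 0 < x) :
    HasDerivAt (fun x : ℝ => (x - 1) * Real.log (k / x + 1))
      (Real.log (k / x + 1) - k * (x - 1) / (x * (x + k))) x := by
  have hbase : 0 < k / x + 1 := by positivity
  have h1 : HasDerivAt (fun x : ℝ => k / x + 1) (k * (-(x ^ 2)⁻¹)) x := by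
    simpa [div_eq_mul_inv] using ((hasDerivAt_inv hx.ne').const_mul k).add_const 1
  have h2 : HasDerivAt (fun x : ℝ => Real.log (k / x + 1))
      (k * (-(x ^ 2)⁻¹) / (k / x + 1)) x := h1.log hbase.ne'
  have h3 : HasDerivAt (fun x : ℝ => (x - 1) * Real.log (k / x + 1))
      (1 * Real.log (k / x + 1) + (x - 1) * (k * (-(x ^ 2)⁻¹) / (k / x + 1))) x :=
    ((hasDerivAt_id x).sub_const 1).mul h2
  convert h3 using 1
  have hx' : x ≠ 0 := hx.ne'
  have hxk : x + k ≠ 0 := by positivity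
  field_simp
  ring

private lemma g_strictMono (k : ℝ) (hk : 0 < k) :
    StrictMonoOn (fun x : ℝ => (x - 1) * Real.log (k / x + 1)) (Set.Ioi 0) := by
  apply strictMonoOn_of_deriv_pos (convex_Ioi 0)
  · apply ContinuousOn.mul (by fun_prop)
    apply ContinuousOn.log
    · exact ((continuousOn_const.div continuousOn_id (fun x hx => ne_of_gt hx)).add continuousOn_const)
    · intro x hx
      have hx : (0:ℝ) < x := hx
      positivity
  · intro x hx
    rw [interior_Ioi] at hx
    have hx : (0:ℝ) < x := hx
    rw [(g_hasDeriv k hk hx).deriv]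
    have hbase : 0 < k / x := by positivity
    -- log (1 + k/x) > (k/x)/(1+k/x) = k/(x+k)
    have hlog : k / (x + k) < Real.log (k / x + 1) := by
      have h0 : (0:ℝ) < 1 / (k / x + 1) := by positivity
      have h1 : (1:ℝ) / (k / x + 1) ≠ 1 := by
        have : (1:ℝ) < k / x + 1 := by linarith
        intro h
        rw [div_eq_one_iff_eq (by positivity)] at h
        linarith
      have := Real.log_lt_sub_one_of_pos h0 h1
      rw [Real.log_div one_ne_zero (ne_of_gt (by positivity)), Real.log_one] at this
      have heq : 1 / (k / x + 1) - 1 = -(k / (x + k)) := by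
        have hxk : (x:ℝ) + k ≠ 0 := by positivity
        have h2 : k / x + 1 = (x + k) / x := by
          rw [div_add' _ _ _ hx.ne']; ring_nf
        rw [h2, one_div_div, div_sub_one hxk]
        rw [show x - (x + k) = -k by ring, neg_div]
      rw [heq] at this
      linarith
    have hle : k * (x - 1) / (x * (x + k)) ≤ k / (x + k) := by
      rw [div_le_div_iff₀ (by positivity) (by positivity)]
      nlinarith
    linarith

theorem stmt1 (k : ℝ) (hk : 0 < k) :
    StrictMonoOn (fun x : ℝ => (k / x + 1) ^ (x - 1)) (Set.Ioi 0) := by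
  have h := (Real.exp_strictMono.comp_strictMonoOn (g_strictMono k hk))
  intro a ha b hb hab
  have := h ha hb hab
  simpa [Function.comp, Real.rpow_def_of_pos (show (0:ℝ) < k / a + 1 by
      have : (0:ℝ) < a := ha; positivity),
    Real.rpow_def_of_pos (show (0:ℝ) < k / b + 1 by
      have : (0:ℝ) < b := hb; positivity), mul_comm] using this
end

section
/- For every p ∈ [0,1] and every positive integer λ, it holds that pλ/(1+pλ) ≤ 1 - (1-p)^λ ≤ 2pλ/(1+pλ). -/
/-!
Both bounds come from Bernoulli's inequality. For the lower bound, `1 + pλ ≤ (1 + p)^λ` gives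
`(1 - p)^λ (1 + pλ) ≤ (1 - p²)^λ ≤ 1`. For the upper bound, `1 - (1 - p)^λ` is at most both `1`
and `pλ`, and `min 1 x ≤ 2x / (1 + x)` because `2x / (1 + x)` is the harmonic mean of `1` and `x`.
-/

section

variable {K : Type*} [Field K] [LinearOrder K] [IsStrictOrderedRing K]

theorem one_sub_pow_mul_one_add_mul_le_one {p : K} (hp₀ : -1 ≤ p) (hp₁ : p ≤ 1) (n : ℕ) :
    (1 - p) ^ n * (1 + p * n) ≤ 1 := by
  have bernoulli : 1 + p * n ≤ (1 + p) ^ n := by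
    simpa [mul_comm] using one_add_mul_le_pow (by linarith : (-2 : K) ≤ p) n
  calc (1 - p) ^ n * (1 + p * n) ≤ (1 - p) ^ n * (1 + p) ^ n := by gcongr
    _ = (1 - p ^ 2) ^ n := by rw [← mul_pow]; ring
    _ ≤ 1 := pow_le_one₀ (by nlinarith) (by nlinarith)

theorem div_one_add_le_one_sub_pow {p : K} (hp₀ : 0 ≤ p) (hp₁ : p ≤ 1) (n : ℕ) :
    p * n / (1 + p * n) ≤ 1 - (1 - p) ^ n := by
  have hpos : 0 < 1 + p * n := by positivity
  rw [div_le_iff₀ hpos]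
  linarith [one_sub_pow_mul_one_add_mul_le_one (by linarith) hp₁ n]

theorem one_sub_pow_le_min {p : K} (hp : p ≤ 1) (n : ℕ) :
    1 - (1 - p) ^ n ≤ min 1 (p * n) := by
  have bernoulli : 1 - p * n ≤ (1 - p) ^ n := by
    simpa [mul_comm, ← sub_eq_add_neg] using one_add_mul_le_pow (by linarith : (-2 : K) ≤ -p) n
  have hpow : 0 ≤ (1 - p) ^ n := pow_nonneg (by linarith) n
  exact le_min (by linarith) (by linarith)

theorem min_one_le_two_mul_div_one_add {x : K} (hx : 0 ≤ x) : min 1 x ≤ 2 * x / (1 + x) := by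
  rw [le_div_iff₀ (by positivity)]
  rcases le_total x 1 with h | h
  · rw [min_eq_right h]
    nlinarith
  · rw [min_eq_left h]
    linarith

end

theorem stmt6_general (p : ℝ) (hp : p ∈ Set.Icc (0 : ℝ) 1) (l : ℕ) :
    p * l / (1 + p * l) ≤ 1 - (1 - p) ^ l ∧
      1 - (1 - p) ^ l ≤ 2 * (p * l) / (1 + p * l) :=
  ⟨div_one_add_le_one_sub_pow hp.1 hp.2 l,
    (one_sub_pow_le_min hp.2 l).trans (min_one_le_two_mul_div_one_add (mul_nonneg hp.1 l.cast_nonneg))⟩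

theorem stmt6 (p : ℝ) (hp : p ∈ Set.Icc (0 : ℝ) 1) (l : ℕ) (hl : 0 < l) :
    p * l / (1 + p * l) ≤ 1 - (1 - p) ^ l ∧
      1 - (1 - p) ^ l ≤ 2 * (p * l) / (1 + p * l) :=
  stmt6_general p hp l
end

section
/- Let f : {0,1}^n → ℕ^2 be a bi-objective function and let a ∈ ℕ be such that |f_1(x) - f_2(x)| ≤ a for every x ∈ {0,1}^n. If S ⊆ {0,1}^n is a set of pairwise incomparable solutions with respect to f, then |S| ≤ a + 1. -/
/-!
An incomparable pair `p, q` in `ℕ × ℕ` has one coordinate strictly larger and the other strictly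
smaller, so the differences `p.1 - p.2` and `q.1 - q.2` are at least `2` apart. On an antichain these
differences are therefore pairwise `2`-separated integers in `[-a, a]`, and halving `d + a` sends them
injectively into `{0, …, a}`.
-/

lemma two_le_abs_sub_of_not_le_of_not_le {p q : ℕ × ℕ} (hpq : ¬ p ≤ q) (hqp : ¬ q ≤ p) :
    2 ≤ |((p.1 : ℤ) - p.2) - ((q.1 : ℤ) - q.2)| := by
  rw [Prod.le_def] at hpq hqp
  rw [le_abs]
  omega

lemma Finset.card_le_of_two_le_abs_sub {α : Type*} (S : Finset α) (g : α → ℤ) (a : ℕ)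
    (hg : ∀ x ∈ S, |g x| ≤ a) (hsep : ∀ x ∈ S, ∀ y ∈ S, x ≠ y → 2 ≤ |g x - g y|) :
    S.card ≤ a + 1 := by
  have hmaps : ∀ x ∈ S, (g x + a) / 2 ∈ Finset.Icc (0 : ℤ) a := by
    intro x hx
    have := abs_le.mp (hg x hx)
    rw [Finset.mem_Icc]
    omega
  have hinj : Set.InjOn (fun x => (g x + a) / 2) S := by
    intro x hx y hy hxy
    by_contra hne
    have := le_abs.mp (hsep x hx y hy hne)
    simp only at hxy
    omega
  simpa using Finset.card_le_card_of_injOn _ hmaps hinj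

theorem stmt8_general (n : ℕ) (a : ℕ)
    (f : (Fin n → Bool) → ℕ × ℕ)
    (ha : ∀ x, |((f x).1 : ℤ) - ((f x).2 : ℤ)| ≤ (a : ℤ))
    (S : Finset (Fin n → Bool))
    (hS : ∀ x ∈ S, ∀ y ∈ S, x ≠ y →
      ¬ ((f y).1 ≤ (f x).1 ∧ (f y).2 ≤ (f x).2) ∧
      ¬ ((f x).1 ≤ (f y).1 ∧ (f x).2 ≤ (f y).2)) :
    S.card ≤ a + 1 := by
  refine S.card_le_of_two_le_abs_sub (fun x => (f x).1 - (f x).2) a (fun x _ => ha x) ?_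
  intro x hx y hy hxy
  obtain ⟨hyx, hxy⟩ := hS x hx y hy hxy
  exact two_le_abs_sub_of_not_le_of_not_le (Prod.le_def.not.mpr hxy) (Prod.le_def.not.mpr hyx)

theorem stmt8 (n : ℕ) (hn : 0 < n) (a : ℕ)
    (f : (Fin n → Bool) → ℕ × ℕ)
    (ha : ∀ x, |((f x).1 : ℤ) - ((f x).2 : ℤ)| ≤ (a : ℤ))
    (S : Finset (Fin n → Bool))
    (hS : ∀ x ∈ S, ∀ y ∈ S, x ≠ y →
      ¬ ((f y).1 ≤ (f x).1 ∧ (f y).2 ≤ (f x).2) ∧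
      ¬ ((f x).1 ≤ (f y).1 ∧ (f x).2 ≤ (f y).2)) :
    S.card ≤ a + 1 :=
  stmt8_general n a f ha S hS
end

section
/- Let n, m be positive integers with 8m | n. For every bit string x_r of length n/m in C and every y_r of length n/m in T, the Hamming distance satisfies H(x_r, y_r) ≥ 3n/(8m), where C is the set of strings whose ones form a single run at the start followed by zeros, or a single run of zeros at the start followed by ones (i.e., LO+TZ = n/m or LZ+TO = n/m), and T is the set of strings whose four consecutive quarters each contain equally many ones and zeros. -/
open Finset

/-- `z` is in `C`: the ones form a single run at the start followed by zeros
(`LO + TZ = L`), or a single run of zeros at the start followed by ones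
(`LZ + TO = L`). -/
def InC (L : ℕ) (z : Fin L → Bool) : Prop :=
  (∃ a ≤ L, ∀ i : Fin L, z i = true ↔ (i : ℕ) < a) ∨
  (∃ a ≤ L, ∀ i : Fin L, z i = true ↔ a ≤ (i : ℕ))

/-- `z` is in `T`: each of the four consecutive quarters of length `n/(4*m)` of the
string of length `n/m` contains exactly `n/(8*m)` ones. -/
def InT (n m : ℕ) (z : Fin (n / m) → Bool) : Prop :=
  ∀ q : Fin 4,
    (Finset.univ.filter (fun i : Fin (n / m) =>
      z i = true ∧ (q : ℕ) * (n / (4 * m)) ≤ (i : ℕ) ∧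
        (i : ℕ) < ((q : ℕ) + 1) * (n / (4 * m)))).card = n / (8 * m)

/-- count of ones of `y` in `[a, b)` -/
def cnt (L : ℕ) (y : Fin L → Bool) (a b : ℕ) : ℕ :=
  (Finset.univ.filter fun i : Fin L => y i = true ∧ a ≤ (i : ℕ) ∧ (i : ℕ) < b).card

lemma cnt_le (L : ℕ) (y : Fin L → Bool) (a b : ℕ) : cnt L y a b ≤ b - a := by
  have h : cnt L y a b ≤ (Finset.range (b - a)).card :=
    Finset.card_le_card_of_injOn (fun i => (i : ℕ) - a)
      (by intro i hi
          simp only [mem_coe, mem_filter] at hi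
          simp only [mem_coe, mem_range]
          omega)
      (by intro i hi j hj hij
          simp only [coe_filter, Set.mem_setOf_eq] at hi hj
          simp only at hij
          exact Fin.ext (by omega))
  simpa using h

lemma cnt_add (L : ℕ) (y : Fin L → Bool) {a b c : ℕ} (hab : a ≤ b) (hbc : b ≤ c) :
    cnt L y a c = cnt L y a b + cnt L y b c := by
  unfold cnt
  rw [← Finset.card_union_of_disjoint]
  · congr 1
    ext i
    simp only [mem_union, mem_filter, mem_univ, true_and]
    constructor
    · rintro ⟨h1, h2, h3⟩
      rcases lt_or_ge (i : ℕ) b with h | h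
      · exact Or.inl ⟨h1, h2, h⟩
      · exact Or.inr ⟨h1, h, h3⟩
    · rintro (⟨h1, h2, h3⟩ | ⟨h1, h2, h3⟩) <;> exact ⟨h1, by omega, by omega⟩
  · rw [Finset.disjoint_left]
    intro i hi hj
    simp only [mem_filter] at hi hj
    omega

lemma card_lt_eq (L a : ℕ) (ha : a ≤ L) :
    (Finset.univ.filter fun i : Fin L => (i : ℕ) < a).card = a := by
  have h : (Finset.univ.filter fun i : Fin L => (i : ℕ) < a).card
      = (Finset.range a).card :=
    Finset.card_nbij (fun i => (i : ℕ))
      (by intro i hi; simp only [mem_coe, mem_filter] at hi; simp [hi.2])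
      (by intro i _ j _ hij; exact Fin.ext hij)
      (by intro b hb
          simp only [coe_range, Set.mem_Iio] at hb
          exact ⟨⟨b, lt_of_lt_of_le hb ha⟩, by simp [hb], rfl⟩)
  simpa using h

theorem stmt18 (n m : ℕ) (hm : 0 < m) (hdvd : 8 * m ∣ n)
    (x y : Fin (n / m) → Bool) (hx : InC (n / m) x) (hy : InT n m y) :
    3 * n / (8 * m) ≤ (Finset.univ.filter (fun i => x i ≠ y i)).card := by
  obtain ⟨t, ht⟩ := hdvd
  have hm8 : 0 < 8 * m := by omega
  have hk : n / (8 * m) = t := by rw [ht, Nat.mul_div_cancel_left _ hm8]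
  have hL : n / m = 8 * t := by
    rw [ht, show 8 * m * t = m * (8 * t) by ring, Nat.mul_div_cancel_left _ hm]
  have h4 : n / (4 * m) = 2 * t := by
    rw [ht, show 8 * m * t = 4 * m * (2 * t) by ring,
      Nat.mul_div_cancel_left _ (by omega : 0 < 4 * m)]
  have hgoal : 3 * n / (8 * m) = 3 * t := by
    rw [ht, show 3 * (8 * m * t) = 8 * m * (3 * t) by ring, Nat.mul_div_cancel_left _ hm8]
  rw [hgoal]
  have hiL : ∀ i : Fin (n / m), (i : ℕ) < 8 * t := fun i => hL ▸ i.isLt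
  -- quarter counts
  have hq : ∀ q : ℕ, q < 4 → cnt (n / m) y (q * (2 * t)) ((q + 1) * (2 * t)) = t := by
    intro q hq4
    have := hy ⟨q, hq4⟩
    simpa [cnt, h4, hk] using this
  have hO2 : cnt (n / m) y 0 (2 * t) = t := by simpa using hq 0 (by norm_num)
  have hO4 : cnt (n / m) y 0 (4 * t) = 2 * t := by
    have h0 := cnt_add (n / m) y (by omega : 0 ≤ 2 * t) (by omega : 2 * t ≤ 4 * t)
    have h1 := hq 1 (by norm_num)
    rw [show (1 : ℕ) * (2 * t) = 2 * t by ring, show (1 + 1) * (2 * t) = 4 * t by ring] at h1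
    omega
  have hO6 : cnt (n / m) y 0 (6 * t) = 3 * t := by
    have h0 := cnt_add (n / m) y (by omega : 0 ≤ 4 * t) (by omega : 4 * t ≤ 6 * t)
    have h1 := hq 2 (by norm_num)
    rw [show (2 : ℕ) * (2 * t) = 4 * t by ring, show (2 + 1) * (2 * t) = 6 * t by ring] at h1
    omega
  have hO8 : cnt (n / m) y 0 (8 * t) = 4 * t := by
    have h0 := cnt_add (n / m) y (by omega : 0 ≤ 6 * t) (by omega : 6 * t ≤ 8 * t)
    have h1 := hq 3 (by norm_num)
    rw [show (3 : ℕ) * (2 * t) = 6 * t by ring, show (3 + 1) * (2 * t) = 8 * t by ring] at h1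
    omega
  -- key bounds on cnt 0 a
  have key : ∀ a, a ≤ 8 * t → a ≤ 2 * cnt (n / m) y 0 a + t ∧ 2 * cnt (n / m) y 0 a ≤ a + t := by
    intro a haL
    rcases (show a ≤ 2 * t ∨ (2 * t ≤ a ∧ a ≤ 4 * t) ∨ (4 * t ≤ a ∧ a ≤ 6 * t) ∨
        (6 * t ≤ a ∧ a ≤ 8 * t) by omega) with h | h | h | h
    · have e2 := cnt_add (n / m) y (Nat.zero_le a) h
      have b1 := cnt_le (n / m) y 0 a
      have b2 := cnt_le (n / m) y a (2 * t)
      omega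
    · have e1 := cnt_add (n / m) y (Nat.zero_le (2 * t)) h.1
      have e2 := cnt_add (n / m) y (Nat.zero_le a) h.2
      have b1 := cnt_le (n / m) y (2 * t) a
      have b2 := cnt_le (n / m) y a (4 * t)
      omega
    · have e1 := cnt_add (n / m) y (Nat.zero_le (4 * t)) h.1
      have e2 := cnt_add (n / m) y (Nat.zero_le a) h.2
      have b1 := cnt_le (n / m) y (4 * t) a
      have b2 := cnt_le (n / m) y a (6 * t)
      omega
    · have e1 := cnt_add (n / m) y (Nat.zero_le (6 * t)) h.1
      have e2 := cnt_add (n / m) y (Nat.zero_le a) h.2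
      have b1 := cnt_le (n / m) y (6 * t) a
      have b2 := cnt_le (n / m) y a (8 * t)
      omega
  rcases hx with ⟨a, ha, hxa⟩ | ⟨a, ha, hxa⟩
  all_goals have ha8 : a ≤ 8 * t := hL ▸ ha
  all_goals have hsum := cnt_add (n / m) y (Nat.zero_le a) ha8
  all_goals have hkey := key a ha8
  -- Case 1: x i = true ↔ i < a
  · have hcard : (Finset.univ.filter fun i : Fin (n / m) => x i ≠ y i).card
        = (Finset.univ.filter fun i : Fin (n / m) => ¬(y i = true) ∧ (i : ℕ) < a).card
          + cnt (n / m) y a (8 * t) := by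
      rw [cnt, ← Finset.card_union_of_disjoint]
      · congr 1
        ext i
        have h8 := hiL i
        have hx' := hxa i
        simp only [mem_filter, mem_union, mem_univ, true_and, ne_eq]
        by_cases hia : (i : ℕ) < a
        · have hxi : x i = true := (hxa i).mpr hia
          cases hyy : y i <;> simp [hxi, hyy, h8] <;> omega
        · have hxi : x i = false := by
            cases hxx : x i
            · rfl
            · exact absurd ((hxa i).mp hxx) hia
          cases hyy : y i <;> simp [hxi, hyy, h8] <;> omega
      · rw [Finset.disjoint_left]
        intro i hi hj
        simp only [mem_filter] at hi hj
        exact hi.2.1 hj.2.1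
    have hA : (Finset.univ.filter fun i : Fin (n / m) => ¬(y i = true) ∧ (i : ℕ) < a).card
        + cnt (n / m) y 0 a = a := by
      have h1 := Finset.card_filter_add_card_filter_not
        (s := (Finset.univ : Finset (Fin (n / m))).filter fun i : Fin (n / m) => (i : ℕ) < a)
        (p := fun i : Fin (n / m) => y i = true)
      rw [Finset.filter_filter, Finset.filter_filter, card_lt_eq (n / m) a ha] at h1
      have e1 : cnt (n / m) y 0 a
          = (Finset.univ.filter fun i : Fin (n / m) => (i : ℕ) < a ∧ y i = true).card := by
        unfold cnt; congr 1; ext i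
        have h0 := Nat.zero_le ((i : ℕ))
        simp only [mem_filter]; tauto
      have e2 : (Finset.univ.filter fun i : Fin (n / m) => ¬(y i = true) ∧ (i : ℕ) < a)
          = Finset.univ.filter fun i : Fin (n / m) => (i : ℕ) < a ∧ ¬(y i = true) := by
        ext i; simp only [mem_filter]; tauto
      rw [e2, e1]
      omega
    rw [hcard]
    omega
  -- Case 2: x i = true ↔ a ≤ i
  · have hcard : (Finset.univ.filter fun i : Fin (n / m) => x i ≠ y i).card
        = cnt (n / m) y 0 a
          + (Finset.univ.filter fun i : Fin (n / m) => ¬(y i = true) ∧ a ≤ (i : ℕ)).card := by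
      rw [cnt, ← Finset.card_union_of_disjoint]
      · congr 1
        ext i
        have h8 := hiL i
        have hx' := hxa i
        simp only [mem_filter, mem_union, mem_univ, true_and, ne_eq]
        by_cases hia : a ≤ (i : ℕ)
        · have hxi : x i = true := (hxa i).mpr hia
          cases hyy : y i <;> simp [hxi, hyy, h8] <;> omega
        · have hxi : x i = false := by
            cases hxx : x i
            · rfl
            · exact absurd ((hxa i).mp hxx) hia
          cases hyy : y i <;> simp [hxi, hyy, h8] <;> omega
      · rw [Finset.disjoint_left]
        intro i hi hj
        simp only [mem_filter] at hi hj
        exact hj.2.1 hi.2.1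
    have hge : (Finset.univ.filter fun i : Fin (n / m) => a ≤ (i : ℕ)).card = 8 * t - a := by
      have h1 := Finset.card_filter_add_card_filter_not
        (s := (Finset.univ : Finset (Fin (n / m)))) (p := fun i : Fin (n / m) => a ≤ (i : ℕ))
      have e2 : (Finset.univ.filter fun i : Fin (n / m) => ¬(a ≤ (i : ℕ)))
          = Finset.univ.filter fun i : Fin (n / m) => (i : ℕ) < a := by
        ext i; simp only [mem_filter, mem_univ, true_and]; omega
      have hcardL : (Finset.univ : Finset (Fin (n / m))).card = 8 * t := by
        rw [Finset.card_univ, Fintype.card_fin]; exact hL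
      rw [e2, card_lt_eq (n / m) a ha, hcardL] at h1
      omega
    have hZ : cnt (n / m) y a (8 * t)
        + (Finset.univ.filter fun i : Fin (n / m) => ¬(y i = true) ∧ a ≤ (i : ℕ)).card
        = 8 * t - a := by
      have h1 := Finset.card_filter_add_card_filter_not
        (s := (Finset.univ : Finset (Fin (n / m))).filter fun i : Fin (n / m) => a ≤ (i : ℕ))
        (p := fun i : Fin (n / m) => y i = true)
      rw [Finset.filter_filter, Finset.filter_filter, hge] at h1
      have e1 : cnt (n / m) y a (8 * t)
          = (Finset.univ.filter fun i : Fin (n / m) => a ≤ (i : ℕ) ∧ y i = true).card := by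
        unfold cnt; congr 1; ext i
        have h8 := hiL i
        simp only [mem_filter]; tauto
      have e2 : (Finset.univ.filter fun i : Fin (n / m) => ¬(y i = true) ∧ a ≤ (i : ℕ))
          = Finset.univ.filter fun i : Fin (n / m) => a ≤ (i : ℕ) ∧ ¬(y i = true) := by
        ext i; simp only [mem_filter]; tauto
      rw [e2, e1]
      omega
    rw [hcard]
    omega
end

section
/- Let n, m be positive integers with 8m | n. For every bit string x_ℓ of length n/m in U and every y_ℓ of length n/m in P, the Hamming distance satisfies H(x_ℓ, y_ℓ) ≥ n/(4m), where U is the set of strings whose four consecutive quarters each have between n/(12m) and n/(6m) ones, and P is the set of strings of the form 1^a 0^{n/m - a} (longest all-ones prefix plus longest all-zeros suffix equals n/m). -/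
/-- `z` is in `U`: each of the four consecutive quarters of length `n/(4*m)` of the
string of length `n/m` contains between `n/(12*m)` and `n/(6*m)` ones. -/
def InU (n m : ℕ) (z : Fin (n / m) → Bool) : Prop :=
  ∀ q : Fin 4,
    n / (12 * m) ≤ (Finset.univ.filter (fun i : Fin (n / m) =>
      z i = true ∧ (q : ℕ) * (n / (4 * m)) ≤ (i : ℕ) ∧
        (i : ℕ) < ((q : ℕ) + 1) * (n / (4 * m)))).card ∧
    (Finset.univ.filter (fun i : Fin (n / m) =>
      z i = true ∧ (q : ℕ) * (n / (4 * m)) ≤ (i : ℕ) ∧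
        (i : ℕ) < ((q : ℕ) + 1) * (n / (4 * m)))).card ≤ n / (6 * m)

/-- `z` is in `P`: `z = 1^a 0^(L-a)`, i.e. the longest all-ones prefix plus the
longest all-zeros suffix equals the length. -/
def InP (L : ℕ) (z : Fin L → Bool) : Prop :=
  ∃ a ≤ L, ∀ i : Fin L, z i = true ↔ (i : ℕ) < a

/-! Write `n = 24mt` and cut `y = 1^a 0^(24t-a)` into four quarters of length `6t`. Only the
quarter of index `a / 6t` can contain the switch point; on each of the other three `y` is constant,
so it disagrees with `x` on all ones or on all zeros of `x` there, and by the definition of `U`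
both number at least `2t`. Hence the distance is at least `3 · 2t = n/(4m)`. -/

open Finset

section Windows

variable {L : ℕ}

theorem card_filter_fin_Ico {lo hi : ℕ} (h : hi ≤ L) :
    #{i : Fin L | lo ≤ (i : ℕ) ∧ (i : ℕ) < hi} = hi - lo := by
  rw [← Nat.card_Ico, ← card_map Fin.valEmbedding]
  congr 1
  ext j
  simp only [mem_map, mem_filter, mem_univ, true_and, Fin.valEmbedding_apply, mem_Ico]
  exact ⟨by rintro ⟨i, hi, rfl⟩; exact hi, fun hj => ⟨⟨j, by omega⟩, hj, rfl⟩⟩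

theorem le_card_filter_ne_of_eq_const {lo hi c : ℕ} (hhi : hi ≤ L) {x y : Fin L → Bool} {b : Bool}
    (hy : ∀ i : Fin L, lo ≤ (i : ℕ) → (i : ℕ) < hi → y i = b)
    (hones : c ≤ #{i | x i = true ∧ lo ≤ (i : ℕ) ∧ (i : ℕ) < hi})
    (hzeros : #{i | x i = true ∧ lo ≤ (i : ℕ) ∧ (i : ℕ) < hi} + c ≤ hi - lo) :
    c ≤ #{i | x i ≠ y i ∧ lo ≤ (i : ℕ) ∧ (i : ℕ) < hi} := by
  have hmis : #{i | x i ≠ y i ∧ lo ≤ (i : ℕ) ∧ (i : ℕ) < hi} =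
      #{i | x i ≠ b ∧ lo ≤ (i : ℕ) ∧ (i : ℕ) < hi} := by
    congr 1
    exact filter_congr fun i _ => and_congr_left fun h => by rw [hy i h.1 h.2]
  rw [hmis]
  cases b
  · simpa using hones
  · have hsplit := card_filter_add_card_filter_not
      (s := ({i | lo ≤ (i : ℕ) ∧ (i : ℕ) < hi} : Finset (Fin L))) (fun i => x i = true)
    rw [filter_filter, filter_filter, card_filter_fin_Ico hhi] at hsplit
    simp only [and_comm (a := lo ≤ _ ∧ _)] at hsplit
    simp only [ne_eq]
    omega

theorem sum_card_filter_window_le {ℓ : ℕ} (p : Fin L → Prop) [DecidablePred p] (s : Finset ℕ) :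
    ∑ q ∈ s, #{i | p i ∧ q * ℓ ≤ (i : ℕ) ∧ (i : ℕ) < (q + 1) * ℓ} ≤ #{i | p i} := by
  rw [← card_biUnion]
  · exact card_le_card (biUnion_subset.2 fun q _ => monotone_filter_right _ fun _ _ h => h.1)
  · intro q _ q' _ hqq'
    refine disjoint_filter.2 fun i _ h h' => hqq' ?_
    rw [← Nat.div_eq_of_lt_le h.2.1 h.2.2, Nat.div_eq_of_lt_le h'.2.1 h'.2.2]

end Windows

theorem Nat.lt_iff_div_lt_div_of_div_ne {i a ℓ : ℕ} (h : i / ℓ ≠ a / ℓ) : i < a ↔ i / ℓ < a / ℓ :=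
  ⟨fun hia => (Nat.div_le_div_right hia.le).lt_of_ne h, Nat.lt_of_div_lt_div⟩

theorem stmt19_general (n m : ℕ) (hm : 0 < m) (hdvd : 24 * m ∣ n)
    (x y : Fin (n / m) → Bool) (hx : InU n m x) (hy : InP (n / m) y) :
    n / (4 * m) ≤ (Finset.univ.filter (fun i => x i ≠ y i)).card := by
  obtain ⟨t, ht⟩ := hdvd
  have hL : n / m = 4 * (6 * t) := Nat.div_eq_of_eq_mul_left hm (by rw [ht]; ring)
  have hℓ : n / (4 * m) = 6 * t := Nat.div_eq_of_eq_mul_left (by positivity) (by rw [ht]; ring)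
  have hlow : n / (12 * m) = 2 * t := Nat.div_eq_of_eq_mul_left (by positivity) (by rw [ht]; ring)
  have hup : n / (6 * m) = 4 * t := Nat.div_eq_of_eq_mul_left (by positivity) (by rw [ht]; ring)
  obtain ⟨a, -, hya⟩ := hy
  have hquarter : ∀ q ∈ (range 4).erase (a / (6 * t)),
      2 * t ≤ #{i | x i ≠ y i ∧ q * (6 * t) ≤ (i : ℕ) ∧ (i : ℕ) < (q + 1) * (6 * t)} := by
    intro q hq
    obtain ⟨hqa, hq4⟩ := mem_erase.1 hq
    have hxq := hx ⟨q, mem_range.1 hq4⟩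
    simp only [hℓ, hlow, hup] at hxq
    refine le_card_filter_ne_of_eq_const (b := decide (q < a / (6 * t)))
      (hL ▸ Nat.mul_le_mul_right _ (mem_range.1 hq4)) (fun i h1 h2 => ?_) hxq.1 ?_
    · have hiq := Nat.div_eq_of_lt_le h1 h2
      rw [Bool.eq_iff_iff, hya, decide_eq_true_iff, ← hiq]
      exact Nat.lt_iff_div_lt_div_of_div_ne (hiq ▸ hqa)
    · have hwidth : (q + 1) * (6 * t) - q * (6 * t) = 6 * t := by
        rw [add_one_mul, Nat.add_sub_cancel_left]
      omega
  rw [hℓ]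
  calc 6 * t = 3 • (2 * t) := by rw [smul_eq_mul]; ring
    _ ≤ #((range 4).erase (a / (6 * t))) • (2 * t) := by
        gcongr
        simpa using pred_card_le_card_erase (s := range 4) (a := a / (6 * t))
    _ ≤ _ := card_nsmul_le_sum _ _ _ hquarter
    _ ≤ _ := sum_card_filter_window_le _ _

theorem stmt19 (n m : ℕ) (hn : 0 < n) (hm : 0 < m) (hdvd : 24 * m ∣ n)
    (x y : Fin (n / m) → Bool) (hx : InU n m x) (hy : InP (n / m) y) :
    n / (4 * m) ≤ (Finset.univ.filter (fun i => x i ≠ y i)).card :=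
  stmt19_general n m hm hdvd x y hx hy
end
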